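/- Let T > 0, h ∈ H¹₀([0,T],ℝ), and write √(φ^h(t)) = U(t) + iV(t) with U, V real. Then for all f, g ∈ C¹([0,T],ℝ), J_{f,g}(φ^h) = ∫₀^T (f(r)U(r) + g(r)V(r)) h'(r) dr − (1/2)∫₀^T (f(r)U(r) + g(r)V(r))² dr; in particular, J_{f,g}(φ^h) ≤ (1/2)∫₀^T h'(r)² dr. -/

import Mathlib

open MeasureTheory Set Filter

/-- The branch of the complex square root mapping `ℂ \ [0,∞)` into the open upper
half-plane; on `[0,∞)` it is the usual nonnegative real square root. -/
noncomputable def upSqrt (z : ℂ) : ℂ :=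
  if z.im = 0 ∧ 0 ≤ z.re then (Real.sqrt z.re : ℂ)
  else Complex.I * (-z) ^ ((1 : ℂ) / 2)

/-- `z ∈ ℂ \ [0,∞)`. -/
def offPosReal (z : ℂ) : Prop := ¬(z.im = 0 ∧ 0 ≤ z.re)

/-- The Cameron–Martin space `H¹₀([0,T],ℝ)`: absolutely continuous `h` with `h 0 = 0`
and derivative `dFun ∈ L²([0,T],ℝ)`, recorded via `h t = ∫₀ᵗ h'`. -/
structure CM (T : ℝ) where
  toFun : ℝ → ℝ
  dFun : ℝ → ℝ
  measurable_dFun : Measurable dFun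
  memL2 : MeasureTheory.MemLp dFun 2 (MeasureTheory.volume.restrict (Set.Ioc 0 T))
  eq_int : ∀ t ∈ Set.Icc 0 T, toFun t = ∫ s in Set.Ioc 0 t, dFun s

/-- `φ` is the solution `φ^h`: continuous on `[0,T]`, `φ 0 = 0`, valued in
`ℂ \ [0,∞)` on `(0,T]`, and `φ t = -t + 2∫₀ᵗ √(φ s) h'(s) ds`. -/
def IsPhiH (T : ℝ) (h : CM T) (φ : ℝ → ℂ) : Prop :=
  ContinuousOn φ (Set.Icc 0 T) ∧ φ 0 = 0 ∧
  (∀ t ∈ Set.Ioc 0 T, offPosReal (φ t)) ∧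
  ∀ t ∈ Set.Icc 0 T, φ t = -(t : ℂ) + 2 * ∫ s in Set.Ioc 0 t, upSqrt (φ s) * ((h.dFun s : ℝ) : ℂ)

/-- `d` is an (integrable) a.e. derivative of `φ` on `[0,T]`, i.e. `Re φ`, `Im φ` are
absolutely continuous with `φ t = ∫₀ᵗ d`. -/
def IsDensityOn (T : ℝ) (φ : ℝ → ℂ) (d : ℝ → ℂ) : Prop :=
  MeasureTheory.IntegrableOn d (Set.Ioc 0 T) ∧
  ∀ t ∈ Set.Icc 0 T, φ t = ∫ s in Set.Ioc 0 t, d s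

/-- The rate function `I(φ) = ∫₀ᵀ (φ'(t)+1)²/(8 φ(t)) dt` for `φ ∈ D([0,T],ℂ)`
(conditions (H1),(H2),(H3)), and `+∞` otherwise.  For any admissible density `d = φ'`,
the realness condition (H3) gives `(φ'+1)²/(8φ) = (Re((φ'+1)/(2√φ)))²/2`. -/
noncomputable def rateI (T : ℝ) (φ : ℝ → ℂ) : ENNReal :=
  ⨅ (d : ℝ → ℂ) (_ : IsDensityOn T φ d ∧
      (∀ t ∈ Set.Ioc 0 T, offPosReal (φ t)) ∧
      (∀ᵐ t ∂(MeasureTheory.volume.restrict (Set.Ioc 0 T)),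
        ((d t + 1) / (2 * upSqrt (φ t))).im = 0) ∧
      MeasureTheory.MemLp (fun t => ((d t + 1) / (2 * upSqrt (φ t))).re) 2
        (MeasureTheory.volume.restrict (Set.Ioc 0 T))),
    ∫⁻ t in Set.Ioc 0 T, ENNReal.ofReal ((((d t + 1) / (2 * upSqrt (φ t))).re) ^ 2 / 2)

/-- Riemann–Stieltjes integral `∫₀ᵀ f da` in its integration-by-parts form
`f(T)a(T) - ∫₀ᵀ a(r) f'(r) dr` (for `a 0 = 0`). -/
noncomputable def RSint (T : ℝ) (f a : ℝ → ℝ) : ℝ :=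
  f T * a T - ∫ r in Set.Ioc 0 T, a r * deriv f r

/-- The functional `J_{f,g}(ξ)`. -/
noncomputable def Jfun (T : ℝ) (f g : ℝ → ℝ) (ξ : ℝ → ℂ) : ℝ :=
  (1 / 2) * (RSint T f (fun r => (ξ r).re + r) + RSint T g (fun r => (ξ r).im)) -
    (1 / 2) * ∫ r in Set.Ioc 0 T,
      (f r ^ 2 * (‖ξ r‖ + (ξ r).re) / 2 +
        g r ^ 2 * (‖ξ r‖ - (ξ r).re) / 2 + f r * g r * (ξ r).im)

/-!
Write `√φ = U + iV`. The equation for `φ^h` says that `Re φ(t) + t` and `Im φ(t)` are the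
primitives of `2Uh'` and `2Vh'`, so integration by parts turns the two Stieltjes integrals in
`J_{f,g}(φ^h)` into `∫ 2(fU + gV)h'`. Since `φ = (U + iV)²`, we have `|φ| + Re φ = 2U²`,
`|φ| - Re φ = 2V²` and `Im φ = 2UV`, so the quadratic part of `J` is `∫ (fU + gV)²`. The bound
then follows from `ah' - a²/2 ≤ h'²/2` pointwise. Integrability comes from the continuity of
`√φ` on `[0,T]`: the branch `upSqrt` is continuous off `[0,∞)` and at `0`, and these are the only
values `φ^h` takes.
-/

lemma upSqrt_sq (z : ℂ) : upSqrt z ^ 2 = z := by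
  unfold upSqrt
  split_ifs with hz
  · rw [← Complex.ofReal_pow, Real.sq_sqrt hz.2]
    exact Complex.ext (by simp) (by simp [hz.1])
  · rw [mul_pow, Complex.I_sq, ← Complex.cpow_nat_mul]
    norm_num

lemma norm_upSqrt (z : ℂ) : ‖upSqrt z‖ = √‖z‖ := by
  rw [← Real.sqrt_sq (norm_nonneg _), ← norm_pow, upSqrt_sq]

lemma continuousAt_upSqrt_of_offPosReal {w : ℂ} (hw : offPosReal w) :
    ContinuousAt upSqrt w := by
  have hopen : IsOpen {z : ℂ | offPosReal z} :=
    ((isClosed_eq Complex.continuous_im continuous_const).inter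
      (isClosed_le continuous_const Complex.continuous_re)).isOpen_compl
  have hslit : -w ∈ Complex.slitPlane := by
    rw [Complex.mem_slitPlane_iff]
    unfold offPosReal at hw
    by_cases him : w.im = 0
    · exact Or.inl (by simpa using lt_of_not_ge (fun h => hw ⟨him, h⟩))
    · exact Or.inr (by simpa using him)
  have hbranch : ContinuousAt (fun z : ℂ => Complex.I * (-z) ^ ((1 : ℂ) / 2)) w :=
    continuousAt_const.mul ((continuousAt_cpow_const hslit).comp continuous_neg.continuousAt)
  refine hbranch.congr ?_
  filter_upwards [hopen.mem_nhds hw] with z hz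
  exact (if_neg hz).symm

lemma continuousAt_upSqrt_zero : ContinuousAt upSqrt 0 := by
  have h0 : upSqrt 0 = 0 := by simp [upSqrt]
  rw [ContinuousAt, h0, tendsto_zero_iff_norm_tendsto_zero]
  simp_rw [norm_upSqrt]
  simpa using continuous_norm.sqrt.tendsto (0 : ℂ)

lemma RSint_eq_integral_mul {T : ℝ} (hT : 0 ≤ T) {f a w : ℝ → ℝ} (hf : ContDiff ℝ 1 f)
    (hw : IntegrableOn w (Ioc 0 T)) (ha : ∀ t ∈ Icc 0 T, a t = ∫ s in Ioc 0 t, w s) :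
    RSint T f a = ∫ s in Ioc 0 T, f s * w s := by
  set P : ℝ → ℝ := fun x => ∫ s in 0..x, w s
  have hw' : IntervalIntegrable w volume 0 T :=
    (intervalIntegrable_iff_integrableOn_Ioc_of_le hT).2 hw
  have haP : ∀ t ∈ Icc 0 T, a t = P t := fun t ht => by
    simp only [P, ha t ht, intervalIntegral.integral_of_le ht.1]
  have hderiv : ∀ᵐ x, x ∈ uIoc 0 T → deriv P x * f x = f x * w x := by
    filter_upwards [hw'.ae_hasDerivAt_integral] with x hx hxI
    rw [(hx (uIoc_subset_uIcc hxI) 0 left_mem_uIcc).deriv, mul_comm]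
  have hibp := AbsolutelyContinuousOnInterval.integral_mul_deriv_eq_deriv_mul
    (hw'.absolutelyContinuousOnInterval_intervalIntegral left_mem_uIcc)
    hf.contDiffOn.absolutelyContinuousOnInterval
  rw [intervalIntegral.integral_congr_ae hderiv] at hibp
  rw [RSint, haP T (right_mem_Icc.2 hT),
    setIntegral_congr_fun measurableSet_Ioc fun r hr => by rw [haP r (Ioc_subset_Icc_self hr)],
    ← intervalIntegral.integral_of_le hT, hibp, ← intervalIntegral.integral_of_le hT]
  simp [P]
  ring

lemma Jfun_integrand_sq (f g : ℝ) (w : ℂ) :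
    f ^ 2 * (‖w ^ 2‖ + (w ^ 2).re) / 2 + g ^ 2 * (‖w ^ 2‖ - (w ^ 2).re) / 2 + f * g * (w ^ 2).im
      = (f * w.re + g * w.im) ^ 2 := by
  rw [norm_pow, Complex.sq_norm, Complex.normSq_apply]
  simp only [sq, Complex.mul_re, Complex.mul_im]
  ring

lemma integral_mul_sub_half_integral_sq_le {α : Type*} [MeasurableSpace α] {μ : Measure α}
    {a u : α → ℝ} (hau : Integrable (fun x => a x * u x) μ) (ha : Integrable (fun x => a x ^ 2) μ)
    (hu : Integrable (fun x => u x ^ 2) μ) :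
    ∫ x, a x * u x ∂μ - 1 / 2 * ∫ x, a x ^ 2 ∂μ ≤ 1 / 2 * ∫ x, u x ^ 2 ∂μ := by
  have key := integral_mono (f := fun x => a x * u x - 1 / 2 * a x ^ 2)
    (hau.sub (ha.const_mul (1 / 2))) (hu.const_mul (1 / 2))
    fun x => by nlinarith [sq_nonneg (a x - u x)]
  rwa [integral_sub hau (ha.const_mul _), integral_const_mul, integral_const_mul] at key

lemma CM.integrableOn_mul_dFun {T : ℝ} (h : CM T) {c : ℝ → ℝ} (hc : ContinuousOn c (Icc 0 T)) :
    IntegrableOn (fun s => c s * h.dFun s) (Ioc 0 T) :=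
  IntegrableOn.continuousOn_mul_of_subset hc (h.memL2.integrable one_le_two) isCompact_Icc
    measurableSet_Ioc Ioc_subset_Icc_self

namespace IsPhiH

variable {T : ℝ} {h : CM T} {φ : ℝ → ℂ}

lemma continuousOn_upSqrt (hφ : IsPhiH T h φ) :
    ContinuousOn (fun t => upSqrt (φ t)) (Icc 0 T) := by
  intro t ht
  have hat : ContinuousAt upSqrt (φ t) := by
    rcases ht.1.eq_or_lt with rfl | hpos
    · rw [hφ.2.1]
      exact continuousAt_upSqrt_zero
    · exact continuousAt_upSqrt_of_offPosReal (hφ.2.2.1 t ⟨hpos, ht.2⟩)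
  exact hat.comp_continuousWithinAt (hφ.1 t ht)

lemma integrableOn_upSqrt_mul (hφ : IsPhiH T h φ) :
    IntegrableOn (fun s => upSqrt (φ s) * (h.dFun s : ℂ)) (Ioc 0 T) :=
  IntegrableOn.continuousOn_mul_of_subset hφ.continuousOn_upSqrt
    (h.memL2.integrable one_le_two).ofReal isCompact_Icc measurableSet_Ioc Ioc_subset_Icc_self

lemma re_add_eq_integral (hφ : IsPhiH T h φ) {t : ℝ} (ht : t ∈ Icc 0 T) :
    (φ t).re + t = ∫ s in Ioc 0 t, 2 * ((upSqrt (φ s)).re * h.dFun s) := by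
  have hint := hφ.integrableOn_upSqrt_mul.mono_set (Ioc_subset_Ioc_right ht.2)
  have hre : (∫ s in Ioc 0 t, upSqrt (φ s) * h.dFun s).re
      = ∫ s in Ioc 0 t, (upSqrt (φ s)).re * h.dFun s := by
    simpa using (integral_re hint).symm
  rw [hφ.2.2.2 t ht, integral_const_mul, ← hre]
  simp

lemma im_eq_integral (hφ : IsPhiH T h φ) {t : ℝ} (ht : t ∈ Icc 0 T) :
    (φ t).im = ∫ s in Ioc 0 t, 2 * ((upSqrt (φ s)).im * h.dFun s) := by
  have hint := hφ.integrableOn_upSqrt_mul.mono_set (Ioc_subset_Ioc_right ht.2)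
  have him : (∫ s in Ioc 0 t, upSqrt (φ s) * h.dFun s).im
      = ∫ s in Ioc 0 t, (upSqrt (φ s)).im * h.dFun s := by
    simpa using (integral_im hint).symm
  rw [hφ.2.2.2 t ht, integral_const_mul, ← him]
  simp

lemma RSint_re_add (hφ : IsPhiH T h φ) (hT : 0 ≤ T) {f : ℝ → ℝ} (hf : ContDiff ℝ 1 f) :
    RSint T f (fun r => (φ r).re + r)
      = ∫ s in Ioc 0 T, f s * (2 * ((upSqrt (φ s)).re * h.dFun s)) :=
  RSint_eq_integral_mul hT hf
    ((h.integrableOn_mul_dFun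
      (Complex.continuous_re.comp_continuousOn hφ.continuousOn_upSqrt)).const_mul 2)
    fun _ ht => hφ.re_add_eq_integral ht

lemma RSint_im (hφ : IsPhiH T h φ) (hT : 0 ≤ T) {g : ℝ → ℝ} (hg : ContDiff ℝ 1 g) :
    RSint T g (fun r => (φ r).im)
      = ∫ s in Ioc 0 T, g s * (2 * ((upSqrt (φ s)).im * h.dFun s)) :=
  RSint_eq_integral_mul hT hg
    ((h.integrableOn_mul_dFun
      (Complex.continuous_im.comp_continuousOn hφ.continuousOn_upSqrt)).const_mul 2)
    fun _ ht => hφ.im_eq_integral ht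

lemma continuousOn_mul_re_add_mul_im (hφ : IsPhiH T h φ) {f g : ℝ → ℝ} (hf : Continuous f)
    (hg : Continuous g) :
    ContinuousOn (fun r => f r * (upSqrt (φ r)).re + g r * (upSqrt (φ r)).im) (Icc 0 T) := by
  have hψ := hφ.continuousOn_upSqrt
  fun_prop

lemma Jfun_eq (hφ : IsPhiH T h φ) (hT : 0 ≤ T) {f g : ℝ → ℝ} (hf : ContDiff ℝ 1 f)
    (hg : ContDiff ℝ 1 g) :
    Jfun T f g φ
      = (∫ r in Ioc 0 T, (f r * (upSqrt (φ r)).re + g r * (upSqrt (φ r)).im) * h.dFun r)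
        - 1 / 2 * ∫ r in Ioc 0 T, (f r * (upSqrt (φ r)).re + g r * (upSqrt (φ r)).im) ^ 2 := by
  have hψ := hφ.continuousOn_upSqrt
  have hfc := hf.continuous
  have hgc := hg.continuous
  have hfU : IntegrableOn (fun s => f s * (2 * ((upSqrt (φ s)).re * h.dFun s))) (Ioc 0 T) := by
    simpa only [mul_assoc] using
      h.integrableOn_mul_dFun (c := fun r => f r * (2 * (upSqrt (φ r)).re)) (by fun_prop)
  have hgV : IntegrableOn (fun s => g s * (2 * ((upSqrt (φ s)).im * h.dFun s))) (Ioc 0 T) := by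
    simpa only [mul_assoc] using
      h.integrableOn_mul_dFun (c := fun r => g r * (2 * (upSqrt (φ r)).im)) (by fun_prop)
  have hsq : ∫ r in Ioc 0 T, (f r ^ 2 * (‖φ r‖ + (φ r).re) / 2 +
        g r ^ 2 * (‖φ r‖ - (φ r).re) / 2 + f r * g r * (φ r).im)
      = ∫ r in Ioc 0 T, (f r * (upSqrt (φ r)).re + g r * (upSqrt (φ r)).im) ^ 2 :=
    setIntegral_congr_fun measurableSet_Ioc fun r _ => by
      simpa only [upSqrt_sq] using Jfun_integrand_sq (f r) (g r) (upSqrt (φ r))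
  rw [Jfun, hφ.RSint_re_add hT hf, hφ.RSint_im hT hg, hsq, ← integral_add hfU hgV,
    ← integral_const_mul]
  congr 1
  exact setIntegral_congr_fun measurableSet_Ioc fun r _ => by ring

end IsPhiH

/-- For `φ = φ^h` with `√(φ^h) = U + iV`, one has
`J_{f,g}(φ^h) = ∫₀ᵀ (fU+gV) h' dr − ½∫₀ᵀ (fU+gV)² dr ≤ ½∫₀ᵀ h'² dr`. -/
theorem stmt8 (T : ℝ) (hT : 0 < T) (h : CM T) (φ : ℝ → ℂ) (hφ : IsPhiH T h φ)
    (U V : ℝ → ℝ)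
    (hU : ∀ t, U t = (upSqrt (φ t)).re) (hV : ∀ t, V t = (upSqrt (φ t)).im)
    (f g : ℝ → ℝ) (hf : ContDiff ℝ 1 f) (hg : ContDiff ℝ 1 g) :
    Jfun T f g φ = (∫ r in Set.Ioc 0 T, (f r * U r + g r * V r) * h.dFun r)
        - (1 / 2) * ∫ r in Set.Ioc 0 T, (f r * U r + g r * V r) ^ 2 ∧
    Jfun T f g φ ≤ (1 / 2) * ∫ r in Set.Ioc 0 T, (h.dFun r) ^ 2 := by
  obtain rfl : U = fun t => (upSqrt (φ t)).re := funext hU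
  obtain rfl : V = fun t => (upSqrt (φ t)).im := funext hV
  have hJ := hφ.Jfun_eq hT.le hf hg
  have hA := hφ.continuousOn_mul_re_add_mul_im hf.continuous hg.continuous
  refine ⟨hJ, hJ ▸ integral_mul_sub_half_integral_sq_le (h.integrableOn_mul_dFun hA)
    ((hA.pow 2).integrableOn_Icc.mono_set Ioc_subset_Icc_self) h.memL2.integrable_sq⟩
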